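/- Let h > 0 and let f ∈ L²(ℝ) have Fourier transform supported in [-π/h, π/h]. Then f is uniquely determined by its samples on the lattice hℤ via the Nyquist–Shannon interpolation formula: for every x ∈ ℝ, f(x) = ∑_{n∈ℤ} sinc(π(x-hn)/h) · f(hn), where sinc(y) = sin(y)/y (with sinc(0)=1). -/

import Mathlib

/-!
Periodize the band `[-π/h, π/h]` to the circle `ℝ / (2π/h)ℤ`. By the inversion formula the
Fourier coefficients of the periodized `ξ ↦ F ξ e^{ixξ}` are the samples `h f(x - hn)`, and those of
the periodized `ξ ↦ e^{-ixξ}` are the values `sinc (π(x + hn)/h)`, so Parseval's identity on the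
circle is the interpolation formula. Parseval needs the periodized `F` to be square integrable.
Since `f ∈ L²`, for some `x₀` the samples `f(x₀ - hn)` are square summable; hence the periodized
`F e^{ix₀ξ}` is an integrable function on the circle with square-summable Fourier coefficients, and
such a function is in `L²` because an integrable function is determined by its coefficients.
-/

open MeasureTheory Complex Set Filter Topology AddCircle Real
open scoped ComplexConjugate ENNReal

lemma ae_eq_zero_of_forall_integral_mul_eq_zero {X : Type*} [PseudoMetricSpace X]
    [MeasurableSpace X] [BorelSpace X] {μ : Measure X} {g : X → ℂ} (hg : Integrable g μ)
    (hint : ∀ φ : C(X, ℂ), ∫ x, φ x * g x ∂μ = 0) : g =ᵐ[μ] 0 := by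
  refine ae_eq_zero_of_forall_setIntegral_isClosed_eq_zero hg fun s hs ↦ ?_
  have hδ (k : ℕ) : (0 : ℝ) < 1 / (k + 1) := Nat.one_div_pos_of_nat
  let φ (k : ℕ) : C(X, ℂ) :=
    ⟨fun x ↦ ((thickenedIndicator (hδ k) s x : ℝ) : ℂ), by fun_prop⟩
  have hlim : ∀ x, Tendsto (fun k ↦ φ k x * g x) atTop (𝓝 (s.indicator g x)) := by
    intro x
    have := tendsto_pi_nhds.1 (thickenedIndicator_tendsto_indicator_closure hδ
      tendsto_one_div_add_atTop_nhds_zero_nat s) x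
    rw [hs.closure_eq] at this
    have := (((continuous_ofReal.comp NNReal.continuous_coe).tendsto _).comp this).mul_const (g x)
    by_cases hx : x ∈ s <;> simpa [hx, φ] using this
  have hbound : ∀ k, ∀ᵐ x ∂μ, ‖φ k x * g x‖ ≤ ‖g x‖ := fun k ↦ ae_of_all _ fun x ↦ by
    simpa [φ, norm_mul] using mul_le_of_le_one_left (norm_nonneg (g x))
      (thickenedIndicator_le_one (hδ k) s x)
  have := tendsto_integral_of_dominated_convergence _
    (fun k ↦ ((φ k).continuous.aestronglyMeasurable.mul hg.1)) hg.norm hbound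
    (ae_of_all _ hlim)
  simp only [Pi.mul_apply, hint, integral_indicator hs.measurableSet] at this
  exact tendsto_nhds_unique this tendsto_const_nhds

lemma norm_cexp_I_mul_ofReal_mul (t ξ : ℝ) : ‖cexp (I * t * ξ)‖ = 1 := by
  rw [show I * t * ξ = ((t * ξ : ℝ) : ℂ) * I by push_cast; ring, norm_exp_ofReal_mul_I]

section AddCircle

variable {T : ℝ} [Fact (0 < T)]

lemma integral_continuousMap_mul_eq_zero_of_fourierCoeff_eq_zero {g : AddCircle T → ℂ}
    (hg : Integrable g haarAddCircle) (hcoeff : ∀ n, fourierCoeff g n = 0)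
    (φ : C(AddCircle T, ℂ)) : ∫ z, φ z * g z ∂haarAddCircle = 0 := by
  have hint (ψ : C(AddCircle T, ℂ)) : Integrable (fun z ↦ ψ z * g z) haarAddCircle :=
    hg.bdd_mul ψ.continuous.aestronglyMeasurable (ae_of_all _ ψ.norm_coe_le_norm)
  let L : C(AddCircle T, ℂ) →L[ℂ] ℂ := LinearMap.mkContinuous
    { toFun ψ := ∫ z, ψ z * g z ∂haarAddCircle
      map_add' ψ χ := by
        simp only [ContinuousMap.add_apply, add_mul, integral_add (hint ψ) (hint χ)]
      map_smul' c ψ := by simp [mul_assoc, integral_const_mul] }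
    (∫ z, ‖g z‖ ∂haarAddCircle) fun ψ ↦ by
      rw [mul_comm, ← integral_const_mul]
      refine (norm_integral_le_integral_norm _).trans (integral_mono (hint ψ).norm
        (hg.norm.const_mul _) fun z ↦ ?_)
      simpa only [norm_mul] using mul_le_mul_of_nonneg_right (ψ.norm_coe_le_norm z) (norm_nonneg _)
  have hfourier (n : ℤ) : L (fourier n) = 0 := by
    simpa [L, fourierCoeff] using hcoeff (-n)
  have hspan : Submodule.span ℂ (range (@fourier T)) ≤ L.ker :=
    Submodule.span_le.mpr (by rintro _ ⟨n, rfl⟩; exact hfourier n)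
  have hker : (⊤ : Submodule ℂ C(AddCircle T, ℂ)) ≤ L.ker := by
    rw [← span_fourier_closure_eq_top]
    exact Submodule.topologicalClosure_minimal _ hspan L.isClosed_ker
  exact hker Submodule.mem_top

lemma ae_eq_zero_of_fourierCoeff_eq_zero {g : AddCircle T → ℂ} (hg : Integrable g haarAddCircle)
    (hcoeff : ∀ n, fourierCoeff g n = 0) : g =ᵐ[haarAddCircle] 0 :=
  ae_eq_zero_of_forall_integral_mul_eq_zero hg
    (integral_continuousMap_mul_eq_zero_of_fourierCoeff_eq_zero hg hcoeff)

lemma memLp_two_of_memℓp_fourierCoeff {g : AddCircle T → ℂ} (hg : Integrable g haarAddCircle)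
    (hcoeff : Memℓp (fourierCoeff g) 2) : MemLp g 2 haarAddCircle := by
  let G : Lp ℂ 2 (haarAddCircle (T := T)) := fourierBasis.repr.symm ⟨fourierCoeff g, hcoeff⟩
  have hG (n : ℤ) : fourierCoeff G n = fourierCoeff g n := by
    rw [← fourierBasis_repr, LinearIsometryEquiv.apply_symm_apply]
  have hGint : Integrable G haarAddCircle := (Lp.memLp G).integrable one_le_two
  have hdiff : g - ⇑G =ᵐ[haarAddCircle] 0 :=
    ae_eq_zero_of_fourierCoeff_eq_zero (hg.sub hGint) fun n ↦ by
      have := hG n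
      simp only [fourierCoeff, Pi.sub_apply, smul_sub] at this ⊢
      rw [integral_sub (hg.fourier_smul _) (hGint.fourier_smul _), this, sub_self]
  exact (Lp.memLp G).ae_eq (hdiff.mono fun z hz ↦ (sub_eq_zero.mp hz).symm)

lemma integral_conj_mul_eq_tsum_fourierCoeff {u v : AddCircle T → ℂ}
    (hu : MemLp u 2 haarAddCircle) (hv : MemLp v 2 haarAddCircle) :
    ∫ z, conj (u z) * v z ∂haarAddCircle = ∑' n, conj (fourierCoeff u n) * fourierCoeff v n := by
  calc ∫ z, conj (u z) * v z ∂haarAddCircle = inner ℂ (hu.toLp u) (hv.toLp v) := by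
        rw [L2.inner_def]
        refine integral_congr_ae ?_
        filter_upwards [hu.coeFn_toLp, hv.coeFn_toLp] with z hzu hzv
        rw [RCLike.inner_apply, hzu, hzv, mul_comm]
    _ = _ := by
        rw [← fourierBasis.repr.inner_map_map, lp.inner_eq_tsum]
        congr 1 with n
        rw [RCLike.inner_apply, fourierBasis_repr, fourierBasis_repr,
          fourierCoeff_congr_ae hu.coeFn_toLp, fourierCoeff_congr_ae hv.coeFn_toLp, mul_comm]

lemma integrable_haarAddCircle_liftIoc {a : ℝ} {G : ℝ → ℂ}
    (hG : IntegrableOn G (Ioc a (a + T))) : Integrable (liftIoc T a G) haarAddCircle :=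
  memLp_one_iff_integrable.1 (memLp_one_iff_integrable.2 hG).memLp_liftIoc.haarAddCircle

lemma memLp_haarAddCircle_liftIoc_cexp (a t : ℝ) (p : ℝ≥0∞) :
    MemLp (liftIoc T a fun ξ ↦ cexp (I * t * ξ)) p haarAddCircle :=
  ((memLp_top_of_bound (by fun_prop) 1 (.of_forall (norm_cexp_I_mul_ofReal_mul t · |>.le))).restrict
    _).memLp_liftIoc.haarAddCircle.mono_exponent le_top

end AddCircle

lemma exists_summable_norm_comp_sub_mul {E : Type*} [NormedAddCommGroup E] {φ : ℝ → E}
    (hφ : Integrable φ) {h : ℝ} (hh : 0 < h) :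
    ∃ x₀, Summable fun n : ℤ ↦ ‖φ (x₀ - h * n)‖ := by
  have hfd := isAddFundamentalDomain_Ioc hh 0
  have hmeas (g : AddSubgroup.zmultiples h) : AEMeasurable (fun x ↦ ‖φ (g +ᵥ x)‖ₑ)
      (volume.restrict (Ioc 0 (0 + h))) :=
    (hφ.1.enorm.comp_quasiMeasurePreserving
      (measurePreserving_add_left volume (g : ℝ)).quasiMeasurePreserving).restrict
  have hfin : ∫⁻ x in Ioc 0 (0 + h), ∑' g : AddSubgroup.zmultiples h, ‖φ (g +ᵥ x)‖ₑ ≠ ∞ := by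
    rw [lintegral_tsum hmeas, ← hfd.lintegral_eq_tsum'' fun y ↦ ‖φ y‖ₑ]
    exact hφ.2.ne
  have : NeZero (volume.restrict (Ioc (0 : ℝ) (0 + h))) := ⟨by simp [hh]⟩
  obtain ⟨x₀, hx₀⟩ := (ae_lt_top' (AEMeasurable.tsum hmeas) hfin).exists
  refine ⟨x₀, ?_⟩
  let shift (n : ℤ) : AddSubgroup.zmultiples h := ⟨(-n) • h, AddSubgroup.zsmul_mem_zmultiples h _⟩
  have hshift : Function.Injective shift := fun m n hmn ↦ by
    simpa [shift, hh.ne'] using congrArg Subtype.val hmn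
  have hsum : ∑' n : ℤ, ‖φ (x₀ - h * n)‖ₑ ≠ ∞ := by
    refine ne_top_of_le_ne_top hx₀.ne <|
      le_of_eq_of_le (tsum_congr fun n ↦ ?_) (ENNReal.tsum_comp_le_tsum_of_injective hshift _)
    simp only [shift, AddSubgroup.mk_vadd, vadd_eq_add, zsmul_eq_mul, Int.cast_neg]
    congr 2
    ring
  simpa using ENNReal.summable_toReal hsum

lemma intervalIntegral_eq_integral_of_forall_lt_abs {E : Type*} [NormedAddCommGroup E]
    [NormedSpace ℝ E] {F : ℝ → E} {a : ℝ} (ha : 0 ≤ a) (hF : ∀ ξ, a < |ξ| → F ξ = 0) :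
    ∫ ξ in -a..a, F ξ = ∫ ξ, F ξ := by
  rw [intervalIntegral.integral_of_le (by linarith), ← integral_Icc_eq_integral_Ioc]
  refine setIntegral_eq_integral_of_forall_compl_eq_zero fun ξ hξ ↦ hF ξ ?_
  rw [mem_Icc, not_and_or, not_le, not_le] at hξ
  rcases hξ with hξ | hξ
  · rw [abs_of_neg (by linarith)]; linarith
  · rw [abs_of_pos (by linarith)]; exact hξ

lemma integral_cexp_I_mul_eq_sinc (a t : ℝ) :
    ∫ ξ in -a..a, cexp (I * t * ξ) = 2 * a * sinc (a * t) := by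
  rcases eq_or_ne t 0 with rfl | ht
  · simp; ring
  rcases eq_or_ne a 0 with rfl | ha
  · simp
  have hIt : I * t ≠ 0 := mul_ne_zero I_ne_zero (ofReal_ne_zero.2 ht)
  have ha' : (a : ℂ) ≠ 0 := ofReal_ne_zero.2 ha
  rw [integral_exp_mul_complex hIt, sinc_of_ne_zero (mul_ne_zero ha ht), ofReal_div, ofReal_sin,
    show I * t * a = ↑(a * t) * I by push_cast; ring,
    show I * t * ↑(-a) = ↑(-(a * t)) * I by push_cast; ring, exp_mul_I, exp_mul_I,
    ofReal_neg, Complex.cos_neg, Complex.sin_neg]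
  have ht' : (t : ℂ) ≠ 0 := ofReal_ne_zero.2 ht
  push_cast
  field_simp
  ring

lemma MeasureTheory.Integrable.mul_cexp_I_mul {F : ℝ → ℂ} (hF : Integrable F) (t : ℝ) :
    Integrable fun ξ ↦ F ξ * cexp (I * t * ξ) :=
  hF.mul_bdd (by fun_prop) (.of_forall fun ξ ↦ (norm_cexp_I_mul_ofReal_mul t ξ).le)

lemma fourier_coe_apply_two_pi_div (h : ℝ) (n : ℤ) (ξ : ℝ) :
    fourier n (ξ : AddCircle (2 * π / h)) = cexp (I * (h * n) * ξ) := by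
  rw [fourier_coe_apply]
  congr 1
  push_cast
  field_simp

section Band

variable {h : ℝ} [Fact (0 < 2 * π / h)]

lemma fourierCoeff_liftIoc_mul_cexp (G : ℝ → ℂ) (x : ℝ) (n : ℤ) :
    fourierCoeff (liftIoc (2 * π / h) (-(π / h)) fun ξ ↦ G ξ * cexp (I * x * ξ)) n =
      (h / (2 * π) : ℝ) • ∫ ξ in -(π / h)..π / h, G ξ * cexp (I * ↑(x - h * n) * ξ) := by
  have hb : -(π / h) + 2 * π / h = π / h := by ring
  rw [fourierCoeff_eq_intervalIntegral _ n (-(π / h)), one_div, inv_div, hb]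
  congr 1
  refine intervalIntegral.integral_congr_ae (.of_forall fun ξ hξ ↦ ?_)
  rw [uIoc_of_le (by linarith [(Fact.out : 0 < 2 * π / h)])] at hξ
  rw [liftIoc_coe_apply (by rwa [hb]), fourier_coe_apply_two_pi_div, smul_eq_mul, mul_left_comm,
    ← Complex.exp_add]
  congr 2
  push_cast
  ring

lemma fourierCoeff_liftIoc_cexp (hh : 0 < h) (x : ℝ) (n : ℤ) :
    fourierCoeff (liftIoc (2 * π / h) (-(π / h)) fun ξ ↦ cexp (I * x * ξ)) n =
      sinc (π * (x - h * n) / h) := by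
  have := fourierCoeff_liftIoc_mul_cexp (h := h) (fun _ ↦ 1) x n
  simp only [one_mul] at this
  have hh' : (h : ℂ) ≠ 0 := ofReal_ne_zero.2 hh.ne'
  rw [this, integral_cexp_I_mul_eq_sinc, Complex.real_smul]
  push_cast
  field_simp

variable {f F : ℝ → ℂ}

lemma fourierCoeff_liftIoc_mul_cexp_of_inversion (hh : 0 < h)
    (hsupp : ∀ ξ, π / h < |ξ| → F ξ = 0)
    (hinv : ∀ x : ℝ, f x = (1 / (2 * π)) • ∫ ξ, F ξ * cexp (I * x * ξ)) (x : ℝ) (n : ℤ) :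
    fourierCoeff (liftIoc (2 * π / h) (-(π / h)) fun ξ ↦ F ξ * cexp (I * x * ξ)) n =
      h * f (x - h * n) := by
  rw [fourierCoeff_liftIoc_mul_cexp, intervalIntegral_eq_integral_of_forall_lt_abs (by positivity)
    fun ξ hξ ↦ by rw [hsupp ξ hξ, zero_mul], hinv, Complex.real_smul, Complex.real_smul]
  push_cast
  field_simp

lemma memLp_two_liftIoc_of_summable (hh : 0 < h) (hF : Integrable F)
    (hsupp : ∀ ξ, π / h < |ξ| → F ξ = 0)
    (hinv : ∀ x : ℝ, f x = (1 / (2 * π)) • ∫ ξ, F ξ * cexp (I * x * ξ)) {x₀ : ℝ}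
    (hx₀ : Summable fun n : ℤ ↦ ‖f (x₀ - h * n)‖ ^ 2) :
    MemLp (liftIoc (2 * π / h) (-(π / h)) F) 2 haarAddCircle := by
  have hu₀ : MemLp (liftIoc (2 * π / h) (-(π / h)) fun ξ ↦ F ξ * cexp (I * x₀ * ξ)) 2
      haarAddCircle := by
    refine memLp_two_of_memℓp_fourierCoeff
      (integrable_haarAddCircle_liftIoc (hF.mul_cexp_I_mul x₀).integrableOn) (memℓp_gen ?_)
    simpa [fourierCoeff_liftIoc_mul_cexp_of_inversion hh hsupp hinv, mul_pow]
      using hx₀.mul_left (h ^ 2)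
  refine hu₀.of_le (integrable_haarAddCircle_liftIoc hF.integrableOn).1 (.of_forall fun z ↦ ?_)
  simp [liftIoc, norm_cexp_I_mul_ofReal_mul]

lemma eq_tsum_sinc_mul_of_memLp_liftIoc (hh : 0 < h) (hsupp : ∀ ξ, π / h < |ξ| → F ξ = 0)
    (hinv : ∀ x : ℝ, f x = (1 / (2 * π)) • ∫ ξ, F ξ * cexp (I * x * ξ))
    (hF2 : MemLp (liftIoc (2 * π / h) (-(π / h)) F) 2 haarAddCircle) (x : ℝ) :
    f x = ∑' n : ℤ, sinc (π * (x - h * n) / h) * f (h * n) := by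
  set E := liftIoc (2 * π / h) (-(π / h)) fun ξ ↦ cexp (I * ↑(-x) * ξ)
  have hcoeff (n : ℤ) : fourierCoeff (liftIoc (2 * π / h) (-(π / h)) F) n = h * f (-(h * n)) := by
    simpa using fourierCoeff_liftIoc_mul_cexp_of_inversion hh hsupp hinv 0 n
  have hlhs : ∫ z, conj (E z) * liftIoc (2 * π / h) (-(π / h)) F z ∂haarAddCircle = h * f x := by
    have := fourierCoeff_liftIoc_mul_cexp_of_inversion hh hsupp hinv x 0
    simp only [fourierCoeff, neg_zero, fourier_zero, one_smul, Int.cast_zero, mul_zero,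
      sub_zero] at this
    rw [← this]
    congr 1 with z
    simp [E, liftIoc, ← exp_conj, mul_comm]
  have hsample (n : ℤ) : conj (sinc (π * (-x - h * ((Equiv.neg ℤ) n : ℤ)) / h) : ℂ) *
      (h * f (-(h * ((Equiv.neg ℤ) n : ℤ)))) = h * (sinc (π * (x - h * n) / h) * f (h * n)) := by
    rw [conj_ofReal, ← sinc_neg]
    simp only [Equiv.neg_apply, Int.cast_neg]
    ring_nf
  have hparseval := integral_conj_mul_eq_tsum_fourierCoeff
    (memLp_haarAddCircle_liftIoc_cexp (T := 2 * π / h) (-(π / h)) (-x) 2) hF2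
  rw [hlhs, ← (Equiv.neg ℤ).tsum_eq] at hparseval
  simp only [fourierCoeff_liftIoc_cexp hh, hcoeff, hsample, tsum_mul_left] at hparseval
  exact mul_left_cancel₀ (ofReal_ne_zero.2 hh.ne') hparseval

end Band

/-- Nyquist–Shannon interpolation: a band-limited L² function (Fourier transform
supported in `[-π/h, π/h]`) is determined by its samples on `hℤ`:
`f(x) = ∑_n sinc(π(x-hn)/h) f(hn)` with `sinc y = sin y / y`, `sinc 0 = 1`. -/
theorem nyquist_shannon (h : ℝ) (hh : 0 < h) (f F : ℝ → ℂ)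
    (hf2 : MemLp f 2 volume)
    (hFint : Integrable F)
    (hsupp : ∀ ξ : ℝ, Real.pi / h < |ξ| → F ξ = 0)
    (hinv : ∀ x : ℝ, f x = (1 / (2 * Real.pi)) •
      ∫ ξ : ℝ, F ξ * Complex.exp (Complex.I * x * ξ)) :
    ∀ x : ℝ, f x = ∑' n : ℤ,
      ((if Real.pi * (x - h * n) / h = 0 then (1 : ℝ)
        else Real.sin (Real.pi * (x - h * n) / h) / (Real.pi * (x - h * n) / h)) : ℂ)
        * f (h * n) := by
  intro x
  have : Fact (0 < 2 * π / h) := ⟨by positivity⟩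
  obtain ⟨x₀, hx₀⟩ := exists_summable_norm_comp_sub_mul (hf2.integrable_norm_pow two_ne_zero) hh
  have hF2 := memLp_two_liftIoc_of_summable hh hFint hsupp hinv (by simpa using hx₀)
  rw [eq_tsum_sinc_mul_of_memLp_liftIoc hh hsupp hinv hF2 x]
  congr! 2 with n
  rw [sinc_apply]
  split_ifs <;> push_cast <;> rfl
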